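/- arXiv:1303.6617 — 3 statements merged into one kernel-verified Lean document; each statement's English description precedes it below -/
import Mathlib

section
/- Under the scaling π_{k,N}^± = (T/N)·φ_±(kT/N), the Riemann sum Σ_{k=0}^{N-1} π_{k,N}^⁺·A_{k+1}^N converges as N → ∞ to ∫₀ᵀ φ₊(s)·exp(-∫ₛᵀ(φ₋+φ₊)(u)du)ds. -/
/-! With `ψ = φ₋ + φ₊`, grid points `tₖ = kT/N` and `xⱼ = (T/N) ψ(tⱼ) ∈ [0, 1]`, the product
`∏ⱼ₌ₖ₊₁^{N-1} (1 - xⱼ)` is within `∑ xⱼ² = O(1/N)` of `exp (-∑ xⱼ)`, and `∑ⱼ₌ₖ₊₁^{N-1} xⱼ` is a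
Riemann sum of `∫_{tₖ₊₁}^T ψ`, whose error vanishes uniformly in `k` by uniform continuity of `ψ`
on `[0, T]`. Hence the sum in question differs by `o(1)` from the Riemann sum of
`s ↦ φ₊(s) exp (-∫ₛᵀ ψ)`, which converges to its integral. -/

open Finset Real Filter MeasureTheory

lemma abs_one_sub_sub_exp_neg_le_sq {x : ℝ} (hx : |x| ≤ 1) : |1 - x - exp (-x)| ≤ x ^ 2 := by
  calc |1 - x - exp (-x)| = |exp (-x) - 1 - -x| := by rw [← abs_neg]; ring_nf
    _ ≤ (-x) ^ 2 := abs_exp_sub_one_sub_id_le (by rwa [abs_neg])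
    _ = x ^ 2 := neg_sq x

lemma abs_exp_neg_sub_exp_neg_le {a b : ℝ} (ha : 0 ≤ a) (hb : 0 ≤ b) :
    |exp (-a) - exp (-b)| ≤ |a - b| := by
  wlog hab : a ≤ b generalizing a b
  · rw [abs_sub_comm, abs_sub_comm a]
    exact this hb ha (le_of_not_ge hab)
  rw [abs_of_nonneg (sub_nonneg.2 (exp_le_exp.2 (neg_le_neg hab))),
    abs_of_nonpos (sub_nonpos.2 hab)]
  have hfactor : exp (-b) = exp (-a) * exp (a - b) := by rw [← exp_add]; ring_nf
  have hlin := add_one_le_exp (a - b)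
  have hle : exp (-a) ≤ 1 := exp_le_one_iff.2 (by linarith)
  nlinarith [exp_pos (-a)]

lemma abs_prod_one_sub_sub_exp_neg_sum_le {ι : Type*} (s : Finset ι) {x : ι → ℝ}
    (h₀ : ∀ i ∈ s, 0 ≤ x i) (h₁ : ∀ i ∈ s, x i ≤ 1) :
    |∏ i ∈ s, (1 - x i) - exp (-∑ i ∈ s, x i)| ≤ ∑ i ∈ s, x i ^ 2 := by
  classical
  induction s using Finset.induction_on with
  | empty => simp
  | insert a s ha ih =>
    simp only [mem_insert, forall_eq_or_imp] at h₀ h₁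
    rw [prod_insert ha, sum_insert ha, sum_insert ha, neg_add, exp_add]
    set P := ∏ i ∈ s, (1 - x i)
    set E := exp (-∑ i ∈ s, x i)
    have hE₀ : 0 ≤ E := (exp_pos _).le
    have hE₁ : E ≤ 1 := exp_le_one_iff.2 (neg_nonpos.2 (sum_nonneg h₀.2))
    calc |(1 - x a) * P - exp (-x a) * E|
        = |(1 - x a) * (P - E) + (1 - x a - exp (-x a)) * E| := by ring_nf
      _ ≤ 1 * |P - E| + x a ^ 2 * 1 := by
        refine (abs_add_le _ _).trans ?_
        rw [abs_mul, abs_mul, abs_of_nonneg hE₀]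
        gcongr
        · exact abs_le.2 ⟨by linarith, by linarith⟩
        exact abs_one_sub_sub_exp_neg_le_sq (abs_le.2 ⟨by linarith, h₁.1⟩)
      _ ≤ x a ^ 2 + ∑ i ∈ s, x i ^ 2 := by linarith [ih h₀.2 h₁.2]

lemma abs_prod_one_sub_sub_exp_neg_le {ι : Type*} (s : Finset ι) {x : ι → ℝ}
    (h₀ : ∀ i ∈ s, 0 ≤ x i) (h₁ : ∀ i ∈ s, x i ≤ 1) {I : ℝ} (hI : 0 ≤ I) :
    |∏ i ∈ s, (1 - x i) - exp (-I)| ≤ ∑ i ∈ s, x i ^ 2 + |∑ i ∈ s, x i - I| :=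
  (abs_sub_le _ (exp (-∑ i ∈ s, x i)) _).trans <| add_le_add
    (abs_prod_one_sub_sub_exp_neg_sum_le s h₀ h₁) (abs_exp_neg_sub_exp_neg_le (sum_nonneg h₀) hI)

lemma abs_sub_mul_sub_integral_le {f : ℝ → ℝ} {a b ε : ℝ} (hf : IntervalIntegrable f volume a b)
    (hε : ∀ x ∈ Set.uIoc a b, |f a - f x| ≤ ε) :
    |(b - a) * f a - ∫ x in a..b, f x| ≤ ε * |b - a| := by
  rw [← smul_eq_mul, ← intervalIntegral.integral_const,
    ← intervalIntegral.integral_sub intervalIntegrable_const hf]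
  exact intervalIntegral.norm_integral_le_of_norm_le_const fun x hx =>
    (norm_eq_abs _).trans_le (hε x hx)

lemma natCast_mul_div_mem_Icc {T : ℝ} (hT : 0 ≤ T) {j N : ℕ} (hj : j ≤ N) :
    (j : ℝ) * T / N ∈ Set.Icc 0 T := by
  refine ⟨by positivity, ?_⟩
  rw [mul_div_right_comm]
  exact mul_le_of_le_one_left hT (div_le_one_of_le₀ (Nat.cast_le.2 hj) (Nat.cast_nonneg N))

lemma natCast_succ_mul_div_sub (T : ℝ) (j N : ℕ) :
    ((j + 1 : ℕ) : ℝ) * T / N - j * T / N = T / N := by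
  push_cast; ring

lemma eventually_abs_sum_Ico_sub_integral_le {f : ℝ → ℝ} {T ε : ℝ} (hT : 0 ≤ T)
    (hf : ContinuousOn f (Set.Icc 0 T)) (hε : 0 < ε) :
    ∀ᶠ N : ℕ in atTop, ∀ m n, m ≤ n → n ≤ N →
      |∑ j ∈ Ico m n, T / N * f (j * T / N) - ∫ x in m * T / N..n * T / N, f x| ≤ ε := by
  set ε' := ε / (T + 1)
  have hε' : 0 < ε' := by positivity
  obtain ⟨δ, hδ, hfδ⟩ := Metric.uniformContinuousOn_iff.1
    (isCompact_Icc.uniformContinuousOn_of_continuous hf) ε' hε'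
  filter_upwards [(tendsto_const_div_atTop_nhds_zero_nat T).eventually_lt_const hδ,
    eventually_ge_atTop 1] with N hmesh hN m n hmn hnN
  have hgrid : ∀ j ≤ N, (j : ℝ) * T / N ∈ Set.Icc 0 T := fun j hj => natCast_mul_div_mem_Icc hT hj
  have hTN : 0 ≤ T / N := by positivity
  have hint : ∀ j < N, IntervalIntegrable f volume (j * T / N) ((j + 1 : ℕ) * T / N) :=
    fun j hj =>
      (hf.mono (Set.uIcc_subset_Icc (hgrid j hj.le) (hgrid (j + 1) hj))).intervalIntegrable
  have hsum : ∑ j ∈ Ico m n, ∫ x in (j : ℝ) * T / N..((j + 1 : ℕ) : ℝ) * T / N, f x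
      = ∫ x in m * T / N..n * T / N, f x :=
    intervalIntegral.sum_integral_adjacent_intervals_Ico hmn fun j hj =>
      hint j (hj.2.trans_le hnN)
  have hcell_err : ∀ j < N,
      |T / N * f (j * T / N) - ∫ x in (j : ℝ) * T / N..((j + 1 : ℕ) : ℝ) * T / N, f x|
        ≤ ε' * (T / N) := fun j hj => by
    have h := abs_sub_mul_sub_integral_le (ε := ε') (hint j hj) fun x hx => by
      rw [Set.uIoc_of_le (by linarith [natCast_succ_mul_div_sub T j N])] at hx
      have hx₀ : x ∈ Set.Icc 0 T := ⟨(hgrid j hj.le).1.trans hx.1.le, hx.2.trans (hgrid _ hj).2⟩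
      refine (hfδ _ (hgrid j hj.le) x hx₀ ?_).le
      rw [Real.dist_eq, abs_sub_lt_iff]
      constructor <;> linarith [hx.1, hx.2, natCast_succ_mul_div_sub T j N]
    rwa [natCast_succ_mul_div_sub T j N, abs_of_nonneg hTN] at h
  rw [← hsum, ← sum_sub_distrib]
  calc _ ≤ ∑ j ∈ Ico m n, ε' * (T / N) :=
        (abs_sum_le_sum_abs _ _).trans <| sum_le_sum fun j hj =>
          hcell_err j ((mem_Ico.1 hj).2.trans_le hnN)
    _ ≤ N * (ε' * (T / N)) := by
        rw [sum_const, Nat.card_Ico, nsmul_eq_mul]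
        gcongr
        exact_mod_cast (Nat.sub_le n m).trans hnN
    _ = ε' * T := by field_simp
    _ ≤ ε := by
        rw [div_mul_eq_mul_div, div_le_iff₀ (by positivity)]
        nlinarith

lemma tendsto_riemann_sum_integral {f : ℝ → ℝ} {T : ℝ} (hT : 0 ≤ T)
    (hf : ContinuousOn f (Set.Icc 0 T)) :
    Tendsto (fun N : ℕ => ∑ k ∈ range N, T / N * f (k * T / N)) atTop
      (nhds (∫ x in (0 : ℝ)..T, f x)) := by
  refine Metric.tendsto_nhds.2 fun ε hε => ?_
  filter_upwards [eventually_abs_sum_Ico_sub_integral_le hT hf (half_pos hε),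
    eventually_ge_atTop 1] with N hN hN₁
  have h := hN 0 N N.zero_le le_rfl
  rw [Nat.Ico_zero_eq_range, Nat.cast_zero, zero_mul, zero_div,
    mul_div_cancel_left₀ T (by positivity)] at h
  rw [Real.dist_eq]
  linarith

lemma abs_prod_Ico_sub_exp_integral_le {ψ : ℝ → ℝ} {T M : ℝ} (hT : 0 ≤ T)
    (hψ : ContinuousOn ψ (Set.Icc 0 T)) (hψ₀ : ∀ t ∈ Set.Icc 0 T, 0 ≤ ψ t)
    (hM : ∀ t ∈ Set.Icc 0 T, ψ t ≤ M) {k N : ℕ} (hk : k < N) (hTM : T * M / N ≤ 1) :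
    |∏ j ∈ Ico (k + 1) N, (1 - T / N * ψ (j * T / N)) - exp (-∫ u in k * T / N..T, ψ u)|
      ≤ (T * M) ^ 2 / N + T * M / N + |∑ j ∈ Ico (k + 1) N, T / N * ψ (j * T / N)
          - ∫ u in (k + 1 : ℕ) * T / N..N * T / N, ψ u| := by
  have hgrid : ∀ j ≤ N, (j : ℝ) * T / N ∈ Set.Icc 0 T := fun j hj => natCast_mul_div_mem_Icc hT hj
  have hN : (0 : ℝ) < N := by exact_mod_cast (Nat.zero_le k).trans_lt hk
  have hTN : 0 ≤ T / N := by positivity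
  have hx₀ : ∀ j ∈ Ico (k + 1) N, 0 ≤ T / N * ψ (j * T / N) := fun j hj =>
    mul_nonneg hTN (hψ₀ _ (hgrid j (mem_Ico.1 hj).2.le))
  have hxM : ∀ j ∈ Ico (k + 1) N, T / N * ψ (j * T / N) ≤ T * M / N := fun j hj =>
    (mul_le_mul_of_nonneg_left (hM _ (hgrid j (mem_Ico.1 hj).2.le)) hTN).trans_eq (by ring)
  have hI : 0 ≤ ∫ u in k * T / N..T, ψ u :=
    intervalIntegral.integral_nonneg (hgrid k hk.le).2 fun u hu =>
      hψ₀ u ⟨(hgrid k hk.le).1.trans hu.1, hu.2⟩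
  refine (abs_prod_one_sub_sub_exp_neg_le _ hx₀ (fun j hj => (hxM j hj).trans hTM) hI).trans ?_
  have hsq : ∑ j ∈ Ico (k + 1) N, (T / N * ψ (j * T / N)) ^ 2 ≤ (T * M) ^ 2 / N :=
    calc _ ≤ ∑ j ∈ Ico (k + 1) N, (T * M / N) ^ 2 :=
          sum_le_sum fun j hj => pow_le_pow_left₀ (hx₀ j hj) (hxM j hj) 2
      _ ≤ N * (T * M / N) ^ 2 := by
          rw [sum_const, Nat.card_Ico, nsmul_eq_mul]
          gcongr
          exact_mod_cast Nat.sub_le _ _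
      _ = (T * M) ^ 2 / N := by field_simp
  have hfirst : |∫ u in k * T / N..(k + 1 : ℕ) * T / N, ψ u| ≤ T * M / N :=
    calc _ ≤ M * |(k + 1 : ℕ) * T / N - k * T / N| :=
          intervalIntegral.norm_integral_le_of_norm_le_const fun u hu => by
            rw [Set.uIoc_of_le (by linarith [natCast_succ_mul_div_sub T k N])] at hu
            have hu₀ : u ∈ Set.Icc 0 T :=
              ⟨(hgrid k hk.le).1.trans hu.1.le, hu.2.trans (hgrid (k + 1) hk).2⟩
            rw [norm_eq_abs, abs_of_nonneg (hψ₀ u hu₀)]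
            exact hM u hu₀
      _ = T * M / N := by rw [natCast_succ_mul_div_sub, abs_of_nonneg hTN]; ring
  have hsplit : ∫ u in k * T / N..T, ψ u
      = (∫ u in k * T / N..(k + 1 : ℕ) * T / N, ψ u)
        + ∫ u in (k + 1 : ℕ) * T / N..N * T / N, ψ u := by
    rw [mul_div_cancel_left₀ T hN.ne']
    exact (intervalIntegral.integral_add_adjacent_intervals
      (hψ.mono (Set.uIcc_subset_Icc (hgrid k hk.le) (hgrid (k + 1) hk))).intervalIntegrable
      (hψ.mono (Set.uIcc_subset_Icc (hgrid (k + 1) hk) ⟨hT, le_rfl⟩)).intervalIntegrable).symm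
  rw [hsplit, sub_add_eq_sub_sub_swap]
  linarith [abs_sub (∑ j ∈ Ico (k + 1) N, T / N * ψ (j * T / N)
    - ∫ u in (k + 1 : ℕ) * T / N..N * T / N, ψ u) (∫ u in k * T / N..(k + 1 : ℕ) * T / N, ψ u)]

lemma eventually_abs_prod_Ico_sub_exp_integral_le {ψ : ℝ → ℝ} {T ε : ℝ} (hT : 0 ≤ T)
    (hψ : ContinuousOn ψ (Set.Icc 0 T)) (hψ₀ : ∀ t ∈ Set.Icc 0 T, 0 ≤ ψ t) (hε : 0 < ε) :
    ∀ᶠ N : ℕ in atTop, ∀ k < N,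
      |∏ j ∈ Ico (k + 1) N, (1 - T / N * ψ (j * T / N)) - exp (-∫ u in k * T / N..T, ψ u)|
        ≤ ε := by
  obtain ⟨M, hM⟩ := isCompact_Icc.exists_bound_of_continuousOn hψ
  have hsmall : ∀ c : ℝ, ∀ᶠ N : ℕ in atTop, c / N ≤ min 1 (ε / 3) := fun c =>
    (tendsto_const_div_atTop_nhds_zero_nat c).eventually_le_const (by positivity)
  filter_upwards [hsmall (T * M), hsmall ((T * M) ^ 2),
    eventually_abs_sum_Ico_sub_integral_le hT hψ (by positivity : 0 < ε / 3)]
    with N hTM hTM₂ hriemann k hk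
  refine (abs_prod_Ico_sub_exp_integral_le hT hψ hψ₀ (fun t ht => (le_abs_self _).trans (hM t ht))
    hk (hTM.trans (min_le_left _ _))).trans ?_
  linarith [min_le_right 1 (ε / 3), hriemann (k + 1) N hk le_rfl]

lemma tendsto_sum_range_mul_of_eventually_abs_le {f : ℝ → ℝ} {a : ℕ → ℕ → ℝ} {C T : ℝ}
    (hT : 0 ≤ T) (hf : ∀ t ∈ Set.Icc 0 T, ‖f t‖ ≤ C)
    (ha : ∀ ε > 0, ∀ᶠ N in atTop, ∀ k < N, |a N k| ≤ ε) :
    Tendsto (fun N : ℕ => ∑ k ∈ range N, T / N * f (k * T / N) * a N k) atTop (nhds 0) := by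
  have hC : 0 ≤ C := (norm_nonneg _).trans (hf 0 ⟨le_rfl, hT⟩)
  refine Metric.tendsto_nhds.2 fun ε hε => ?_
  set ε' := ε / (T * C + 1)
  filter_upwards [ha ε' (by positivity), eventually_ge_atTop 1] with N hN hN₁
  rw [dist_zero_right, norm_eq_abs]
  calc _ ≤ ∑ k ∈ range N, T / N * C * ε' :=
        (abs_sum_le_sum_abs _ _).trans <| sum_le_sum fun k hk => by
          rw [abs_mul, abs_mul, abs_of_nonneg (by positivity : 0 ≤ T / N)]
          gcongr
          · exact hf _ (natCast_mul_div_mem_Icc hT (mem_range.1 hk).le)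
          · exact hN k (mem_range.1 hk)
    _ = T * C * ε' := by
        rw [sum_const, card_range, nsmul_eq_mul]
        field_simp
    _ < ε := by
        rw [mul_div_assoc', div_lt_iff₀ (by positivity)]
        linarith

theorem stmt9_general (T : ℝ) (hT : 0 < T) (φm φp : ℝ → ℝ)
    (hφm : Continuous φm) (hφp : Continuous φp)
    (hφmpos : ∀ t, 0 < φm t) (hφppos : ∀ t, 0 < φp t) :
    Tendsto
      (fun (N : ℕ) => ∑ k ∈ Finset.range N,
        (T / N) * φp (k * T / N) *
          ∏ j ∈ Finset.Ico (k + 1) N, (1 - (T / N) * (φm (j * T / N) + φp (j * T / N))))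
      atTop
      (nhds (∫ s in (0:ℝ)..T, φp s * Real.exp (-∫ u in s..T, (φm u + φp u)))) := by
  have hψ : Continuous fun u => φm u + φp u := hφm.add hφp
  have hexp : Continuous fun s => exp (-∫ u in s..T, (φm u + φp u)) := by
    refine continuous_exp.comp (Continuous.neg ?_)
    simp_rw [intervalIntegral.integral_symm T]
    exact (intervalIntegral.continuous_primitive (μ := volume)
      (fun a b => hψ.intervalIntegrable a b) T).neg
  obtain ⟨C, hC⟩ := (isCompact_Icc (a := 0) (b := T)).exists_bound_of_continuousOn hφp.continuousOn
  have hprod := tendsto_sum_range_mul_of_eventually_abs_le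
    (a := fun N k => ∏ j ∈ Ico (k + 1) N, (1 - T / N * (φm (j * T / N) + φp (j * T / N)))
      - exp (-∫ u in k * T / N..T, (φm u + φp u))) hT.le hC fun ε hε =>
    eventually_abs_prod_Ico_sub_exp_integral_le (ψ := fun u => φm u + φp u) hT.le hψ.continuousOn
      (fun t _ => (add_pos (hφmpos t) (hφppos t)).le) hε
  have hsum := (tendsto_riemann_sum_integral
    (f := fun s => φp s * exp (-∫ u in s..T, (φm u + φp u))) hT.le
    (hφp.mul hexp).continuousOn).add hprod
  rw [add_zero] at hsum
  refine hsum.congr fun N => ?_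
  rw [← sum_add_distrib]
  exact sum_congr rfl fun k _ => by ring

/-- convergence of the Riemann sums `Σ π⁺_{k,N} A^N_{k+1}` towards
`I(φ₊) = ∫₀ᵀ φ₊(s) e^{-∫ₛᵀ(φ₋+φ₊)} ds`. Here `A^N_{k+1}` for `k = N-1` is the
empty product `1`, matching `A_N^N = 1`. -/
theorem stmt9 (T : ℝ) (hT : 0 < T) (φm φp : ℝ → ℝ)
    (hφm : Continuous φm) (hφp : Continuous φp)
    (hφmper : ∀ t, φm (t + T) = φm t) (hφpper : ∀ t, φp (t + T) = φp t)
    (hφmpos : ∀ t, 0 < φm t) (hφppos : ∀ t, 0 < φp t) :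
    Tendsto
      (fun (N : ℕ) => ∑ k ∈ Finset.range N,
        (T / N) * φp (k * T / N) *
          ∏ j ∈ Finset.Ico (k + 1) N, (1 - (T / N) * (φm (j * T / N) + φp (j * T / N))))
      atTop
      (nhds (∫ s in (0:ℝ)..T, φp s * Real.exp (-∫ u in s..T, (φm u + φp u)))) :=
  stmt9_general T hT φm φp hφm hφp hφmpos hφppos
end

section
/- Let φ₀, φ₁ > 0 and T > 0, with φ₋(t) = φ₀ on [0,T/2) and φ₁ on [T/2,T), and φ₊(t) = φ₀+φ₁-φ₋(t), extended T-periodically. Then the unique T-periodic solution of μ₋' = -φ₋μ₋ + φ₊(1-μ₋) is μ₋(t) = [e^{-(φ₀+φ₁)t}/(1+e^{-(φ₀+φ₁)T/2})]·(φ₀-φ₁)/(φ₀+φ₁) + φ₁/(φ₀+φ₁) for t ∈ [0,T/2), and it satisfies μ₋(t+T/2) = 1-μ₋(t). -/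
/-!
Since `φ₋(t + T/2) + φ₋(t) = φ₀ + φ₁`, the defect `w(t) = μ(t) + μ(t + T/2) - 1` solves
`w' = -(φ₀ + φ₁) w` away from the jumps. Over one period `w` is then multiplied by
`exp (-(φ₀ + φ₁) T) ≠ 1`, so periodicity forces `w = 0`. On `[0, T/2)` the rates are constant, so
`μ` relaxes exponentially to `φ₁ / (φ₀ + φ₁)`, and `μ(T/2) = 1 - μ(0)` fixes the amplitude.
-/

open Real Set Function

lemma eq_of_hasDerivAt_zero_Ioo {f : ℝ → ℝ} {u v : ℝ} (hc : ContinuousOn f (Icc u v))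
    (hd : ∀ t ∈ Ioo u v, HasDerivAt f 0 t) : ∀ t ∈ Icc u v, f t = f u := by
  rintro t ⟨hut, htv⟩
  rcases hut.eq_or_lt with rfl | hlt
  · rfl
  obtain ⟨c, -, hslope⟩ := exists_hasDerivAt_eq_slope f (fun _ => 0) hlt
    (hc.mono (Icc_subset_Icc le_rfl htv)) fun x hx => hd x ⟨hx.1, hx.2.trans_le htv⟩
  rw [eq_comm, div_eq_zero_iff, sub_eq_zero] at hslope
  exact hslope.resolve_right (sub_ne_zero.mpr hlt.ne')

lemma eq_mul_exp_of_hasDerivAt_Ioo {g : ℝ → ℝ} {s u v : ℝ} (hc : ContinuousOn g (Icc u v))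
    (hd : ∀ t ∈ Ioo u v, HasDerivAt g (-s * g t) t) :
    ∀ t ∈ Icc u v, g t = g u * exp (-s * (t - u)) := by
  have hconst := eq_of_hasDerivAt_zero_Ioo (f := fun t => g t * exp (s * t))
    (hc.mul (by fun_prop)) fun t ht => by
      have h := (hd t ht).mul (hasDerivAt_const_mul (x := t) s).exp
      rwa [show -s * g t * exp (s * t) + g t * (exp (s * t) * s) = 0 by ring] at h
  intro t ht
  have key : g t * exp (s * t) = g u * exp (s * u) := hconst t ht
  rw [show -s * (t - u) = s * u + -(s * t) by ring, exp_add, exp_neg, ← mul_assoc, ← key,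
    mul_inv_cancel_right₀ (exp_pos _).ne']

lemma ne_int_mul_of_mem_Ioo {h t : ℝ} (hh : 0 < h) {n : ℤ}
    (ht : t ∈ Ioo (n * h) ((n + 1) * h)) (k : ℤ) : t ≠ k * h := by
  rintro rfl
  have hnk : (n : ℝ) < k := lt_of_mul_lt_mul_right ht.1 hh.le
  have hkn : (k : ℝ) < n + 1 := lt_of_mul_lt_mul_right ht.2 hh.le
  norm_cast at hnk hkn
  omega

lemma eq_zero_of_periodic_of_hasDerivAt {g : ℝ → ℝ} {s T : ℝ} (hs : s ≠ 0) (hT : 0 < T)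
    (hg : Continuous g) (hper : Periodic g T)
    (hd : ∀ t, (∀ k : ℤ, t ≠ k * (T / 2)) → HasDerivAt g (-s * g t) t) (t : ℝ) : g t = 0 := by
  have hT2 : 0 < T / 2 := by positivity
  have onFirstHalf := eq_mul_exp_of_hasDerivAt_Ioo hg.continuousOn fun t ht =>
    hd t (ne_int_mul_of_mem_Ioo hT2 (n := 0) (by simpa using ht))
  have onSecondHalf := eq_mul_exp_of_hasDerivAt_Ioo (u := T / 2) (v := T) hg.continuousOn
    fun t ht => hd t <|
      ne_int_mul_of_mem_Ioo hT2 (n := 1) ⟨by simpa using ht.1, by push_cast; linarith [ht.2]⟩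
  have hg0 : g 0 = 0 := by
    have hloop : g 0 = g 0 * exp (-s * T) := by
      have := onSecondHalf T ⟨by linarith, le_rfl⟩
      rwa [onFirstHalf (T / 2) ⟨hT2.le, le_rfl⟩, mul_assoc, ← exp_add, ← zero_add T, hper 0,
        zero_add, show -s * (T / 2 - 0) + -s * (T - T / 2) = -s * T by ring] at this
    have hexp : exp (-s * T) ≠ 1 := by
      rw [Ne, exp_eq_one_iff]
      exact mul_ne_zero (neg_ne_zero.mpr hs) hT.ne'
    have : g 0 * (1 - exp (-s * T)) = 0 := by linear_combination hloop
    exact (mul_eq_zero.mp this).resolve_right (sub_ne_zero.mpr hexp.symm)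
  obtain ⟨y, ⟨hy0, hyT⟩, hty⟩ := hper.exists_mem_Ico₀ hT t
  rw [hty]
  rcases le_total y (T / 2) with hy | hy
  · rw [onFirstHalf y ⟨hy0, hy⟩, hg0, zero_mul]
  · rw [onSecondHalf y ⟨hy, hyT.le⟩, onFirstHalf (T / 2) ⟨hT2.le, le_rfl⟩, hg0, zero_mul,
      zero_mul]

lemma step_add_half_period_add_self {T φ0 φ1 : ℝ} {φm : ℝ → ℝ} (hT : 0 < T)
    (hφmper : ∀ t, φm (t + T) = φm t)
    (hφm0 : ∀ t ∈ Ico (0 : ℝ) (T / 2), φm t = φ0) (hφm1 : ∀ t ∈ Ico (T / 2) T, φm t = φ1)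
    (t : ℝ) : φm (t + T / 2) + φm t = φ0 + φ1 := by
  have hper : Periodic (fun t => φm (t + T / 2) + φm t) T := fun t => by
    simp only [add_right_comm t T, hφmper]
  obtain ⟨y, ⟨hy0, hyT⟩, hty⟩ := hper.exists_mem_Ico₀ hT t
  rw [hty]
  rcases lt_or_ge y (T / 2) with hy | hy
  · rw [hφm0 y ⟨hy0, hy⟩, hφm1 (y + T / 2) ⟨by linarith, by linarith⟩, add_comm]
  · rw [show y + T / 2 = y - T / 2 + T by ring, hφmper, hφm0 _ ⟨by linarith, by linarith⟩,
      hφm1 y ⟨hy, hyT⟩]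

lemma hasDerivAt_add_half_period_sub_one {T s : ℝ} {φm φp μ : ℝ → ℝ}
    (hswap : ∀ t, φm (t + T / 2) + φm t = s) (hφp : ∀ t, φp t = s - φm t)
    (hμode : ∀ t, (∀ k : ℤ, t ≠ k * (T / 2)) →
      HasDerivAt μ (-(φm t) * μ t + φp t * (1 - μ t)) t)
    (t : ℝ) (ht : ∀ k : ℤ, t ≠ k * (T / 2)) :
    HasDerivAt (fun t => μ t + μ (t + T / 2) - 1) (-s * (μ t + μ (t + T / 2) - 1)) t := by
  have ht' : ∀ k : ℤ, t + T / 2 ≠ k * (T / 2) := fun k hk => ht (k - 1) (by push_cast; linarith)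
  refine (((hμode t ht).add ((hμode _ ht').comp_add_const t (T / 2))).sub_const 1).congr_deriv ?_
  rw [hφp, hφp, ← hswap t]
  ring

lemma eq_of_hasDerivAt_of_apply_half_period_eq_one_sub {T φ0 φ1 : ℝ} {μ : ℝ → ℝ}
    (hs : φ0 + φ1 ≠ 0) (hμ : ContinuousOn μ (Icc 0 (T / 2)))
    (hode : ∀ t ∈ Ioo 0 (T / 2), HasDerivAt μ (-φ0 * μ t + φ1 * (1 - μ t)) t)
    (hhalf : μ (T / 2) = 1 - μ 0) :
    ∀ t ∈ Icc 0 (T / 2), μ t = exp (-(φ0 + φ1) * t) / (1 + exp (-(φ0 + φ1) * T / 2)) *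
      ((φ0 - φ1) / (φ0 + φ1)) + φ1 / (φ0 + φ1) := by
  set s := φ0 + φ1
  have decay := eq_mul_exp_of_hasDerivAt_Ioo (g := fun t => μ t - φ1 / s) (s := s)
    (hμ.sub continuousOn_const) fun t ht => (hode t ht).sub_const _ |>.congr_deriv <| by
      field_simp
      ring
  simp only [sub_zero] at decay
  intro t ht
  have h0 := decay (T / 2) ⟨ht.1.trans ht.2, le_rfl⟩
  rw [hhalf, ← mul_div_assoc] at h0
  have hden : 1 + exp (-s * T / 2) ≠ 0 := by positivity
  have h12 : 1 - 2 * (φ1 / s) = (φ0 - φ1) / s := by field_simp; ring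
  have hμ0 : μ 0 - φ1 / s = (φ0 - φ1) / s / (1 + exp (-s * T / 2)) := by
    rw [eq_div_iff hden]
    linear_combination h12 - h0
  rw [← sub_eq_iff_eq_add, decay t ht, hμ0]
  ring

/-- explicit formula for the periodic stationary solution for
piecewise-constant rates, and its half-period antisymmetry. -/
theorem stmt10 (T φ0 φ1 : ℝ) (hT : 0 < T) (hφ0 : 0 < φ0) (hφ1 : 0 < φ1)
    (φm φp : ℝ → ℝ)
    (hφmper : ∀ t, φm (t + T) = φm t)
    (hφm0 : ∀ t ∈ Set.Ico (0:ℝ) (T / 2), φm t = φ0)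
    (hφm1 : ∀ t ∈ Set.Ico (T / 2) T, φm t = φ1)
    (hφp : ∀ t, φp t = φ0 + φ1 - φm t)
    (μ : ℝ → ℝ) (hμcont : Continuous μ)
    (hμper : ∀ t, μ (t + T) = μ t)
    -- the ODE holds away from the jump times (multiples of T/2)
    (hμode : ∀ t, (∀ k : ℤ, t ≠ (k : ℝ) * (T / 2)) →
      HasDerivAt μ (-(φm t) * μ t + φp t * (1 - μ t)) t) :
    (∀ t ∈ Set.Ico (0:ℝ) (T / 2),
      μ t = Real.exp (-(φ0 + φ1) * t) / (1 + Real.exp (-(φ0 + φ1) * T / 2)) *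
          ((φ0 - φ1) / (φ0 + φ1)) + φ1 / (φ0 + φ1)) ∧
    ∀ t, μ (t + T / 2) = 1 - μ t := by
  have hs : φ0 + φ1 ≠ 0 := by positivity
  have hantisymm (t : ℝ) : μ (t + T / 2) = 1 - μ t := by
    have hdefect := eq_zero_of_periodic_of_hasDerivAt hs hT (by fun_prop)
      (fun t => by simp only [add_right_comm t T, hμper])
      (hasDerivAt_add_half_period_sub_one
        (step_add_half_period_add_self hT hφmper hφm0 hφm1) hφp hμode) t
    linarith
  refine ⟨fun t ht => ?_, hantisymm⟩
  refine eq_of_hasDerivAt_of_apply_half_period_eq_one_sub hs hμcont.continuousOn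
    (fun t ht => ?_) (by simpa using hantisymm 0) t (Ico_subset_Icc_self ht)
  refine (hμode t fun k => ne_int_mul_of_mem_Ioo (by positivity) (n := 0) (by simpa using ht) k)
    |>.congr_deriv ?_
  rw [hφp, hφm0 t (Ioo_subset_Ico_self ht)]
  ring
end

section
/- With the step rates φ₋ = φ₀·1_{[0,T/2)} + φ₁·1_{[T/2,T)} and φ₊ = φ₀+φ₁-φ₋, and μ₋ the T-periodic stationary solution, the integral ∫₀ᵀ φ₋(s)μ₋(s)ds equals φ₀φ₁T/(φ₀+φ₁) + ((φ₀-φ₁)/(φ₀+φ₁))²·tanh((φ₀+φ₁)T/4). -/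
open Real intervalIntegral Set
open MeasureTheory (volume)

/-!
Since `μ (t + T/2) = 1 - μ t` and the rates swap after half a period, folding the second half
of the period onto the first turns the integrand into `φ₁ + (φ₀ - φ₁) μ`, which on `[0, T/2)` is
the constant `2 φ₀ φ₁ / (φ₀ + φ₁)` plus a multiple of `exp (-(φ₀ + φ₁) s)`. Integrating the
exponential produces `(1 - q) / (1 + q)` with `q = exp (-(φ₀ + φ₁) T / 2)`, which is
`tanh ((φ₀ + φ₁) T / 4)`.
-/

theorem intervalIntegral_eq_integral_add_comp_add_half {E : Type*} [NormedAddCommGroup E]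
    [NormedSpace ℝ E] {f : ℝ → E} {T : ℝ} (hf : IntervalIntegrable f volume 0 (T / 2))
    (hf' : IntervalIntegrable (fun x => f (x + T / 2)) volume 0 (T / 2)) :
    ∫ x in (0:ℝ)..T, f x = ∫ x in (0:ℝ)..T / 2, (f x + f (x + T / 2)) := by
  have hsecond : IntervalIntegrable f volume (T / 2) T := by
    simpa [add_halves] using (IntervalIntegrable.comp_add_right_iff (c := T / 2)).mp hf'
  rw [integral_add hf hf', integral_comp_add_right, zero_add, add_halves,
    integral_add_adjacent_intervals hf hsecond]

theorem intervalIntegral_eq_integral_add_of_eqOn_Ico_halves {E : Type*} [NormedAddCommGroup E]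
    [NormedSpace ℝ E] {f g₁ g₂ : ℝ → E} {T : ℝ} (hT : 0 ≤ T)
    (hg₁ : IntervalIntegrable g₁ volume 0 (T / 2)) (hg₂ : IntervalIntegrable g₂ volume 0 (T / 2))
    (h₁ : EqOn g₁ f (Ico 0 (T / 2))) (h₂ : EqOn g₂ (fun x => f (x + T / 2)) (Ico 0 (T / 2))) :
    ∫ x in (0:ℝ)..T, f x = ∫ x in (0:ℝ)..T / 2, (g₁ x + g₂ x) := by
  have hIoo : uIoo 0 (T / 2) ⊆ Ico 0 (T / 2) := by
    rw [uIoo_of_le (by positivity)]; exact Ioo_subset_Ico_self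
  rw [intervalIntegral_eq_integral_add_comp_add_half (hg₁.congr_uIoo (h₁.mono hIoo))
      (hg₂.congr_uIoo (h₂.mono hIoo))]
  exact integral_congr_Ioo_of_le (by positivity)
    fun x hx => by rw [h₁ (Ioo_subset_Ico_self hx), h₂ (Ioo_subset_Ico_self hx)]

theorem integral_exp_neg_mul {c : ℝ} (hc : c ≠ 0) (b : ℝ) :
    ∫ x in (0:ℝ)..b, exp (-c * x) = (1 - exp (-c * b)) / c := by
  rw [integral_comp_mul_left exp (neg_ne_zero.mpr hc), integral_exp, mul_zero, exp_zero,
    smul_eq_mul]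
  field_simp
  ring

theorem integral_const_add_mul_exp_neg_mul (a k : ℝ) {c : ℝ} (hc : c ≠ 0) (b : ℝ) :
    ∫ x in (0:ℝ)..b, (a + k * exp (-c * x)) = a * b + k * ((1 - exp (-c * b)) / c) := by
  rw [integral_add intervalIntegrable_const (Continuous.intervalIntegrable (by fun_prop) _ _),
    integral_const, sub_zero, smul_eq_mul, mul_comm b, integral_const_mul,
    integral_exp_neg_mul hc]

theorem tanh_eq_one_sub_exp_div_one_add_exp (x : ℝ) :
    tanh x = (1 - exp (-2 * x)) / (1 + exp (-2 * x)) := by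
  have hexp : exp (-2 * x) = exp (-x) * exp (-x) := by rw [← exp_add]; ring_nf
  rw [tanh_eq, hexp, exp_neg]
  field_simp

theorem stmt11_general (T φ0 φ1 : ℝ) (hT : 0 < T) (hφ0 : 0 < φ0) (hφ1 : 0 < φ1)
    (φm : ℝ → ℝ)
    (hφm0 : ∀ t ∈ Set.Ico (0:ℝ) (T / 2), φm t = φ0)
    (hφm1 : ∀ t ∈ Set.Ico (T / 2) T, φm t = φ1)
    (μ : ℝ → ℝ)
    (hμ : ∀ t ∈ Set.Ico (0:ℝ) (T / 2),
      μ t = Real.exp (-(φ0 + φ1) * t) / (1 + Real.exp (-(φ0 + φ1) * T / 2)) *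
          ((φ0 - φ1) / (φ0 + φ1)) + φ1 / (φ0 + φ1))
    (hμhalf : ∀ t, μ (t + T / 2) = 1 - μ t) :
    (∫ s in (0:ℝ)..T, φm s * μ s) =
      φ0 * φ1 * T / (φ0 + φ1) +
        ((φ0 - φ1) / (φ0 + φ1)) ^ 2 * Real.tanh ((φ0 + φ1) * T / 4) := by
  set c := φ0 + φ1
  set D := 1 + exp (-c * T / 2) with hD
  have hc0 : c ≠ 0 := by positivity
  have hD0 : D ≠ 0 := by positivity
  set M : ℝ → ℝ := fun s => exp (-c * s) / D * ((φ0 - φ1) / c) + φ1 / c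
  have hfirst : EqOn (fun s => φ0 * M s) (fun s => φm s * μ s) (Ico 0 (T / 2)) :=
    fun s hs => by simp only [hφm0 s hs, hμ s hs, M]
  have hsecond : EqOn (fun s => φ1 * (1 - M s)) (fun s => φm (s + T / 2) * μ (s + T / 2))
      (Ico 0 (T / 2)) := fun s hs => by
    have hs' : s + T / 2 ∈ Ico (T / 2) T := ⟨by linarith [hs.1], by linarith [hs.2]⟩
    simp only [hφm1 _ hs', hμhalf, hμ s hs, M]
  have hfolded : ∀ s, φ0 * M s + φ1 * (1 - M s) =
      2 * φ0 * φ1 / c + ((φ0 - φ1) / c) ^ 2 * (c / D) * exp (-c * s) := fun s => by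
    simp only [M]
    field_simp
    ring
  rw [intervalIntegral_eq_integral_add_of_eqOn_Ico_halves hT.le
      (Continuous.intervalIntegrable (by fun_prop) _ _)
      (Continuous.intervalIntegrable (by fun_prop) _ _) hfirst hsecond,
    funext hfolded, integral_const_add_mul_exp_neg_mul _ _ hc0,
    tanh_eq_one_sub_exp_div_one_add_exp,
    show -c * (T / 2) = -c * T / 2 by ring, show -2 * (c * T / 4) = -c * T / 2 by ring, ← hD]
  field_simp

/-- the mean number of transitions per period for the
piecewise-constant rates model. -/
theorem stmt11 (T φ0 φ1 : ℝ) (hT : 0 < T) (hφ0 : 0 < φ0) (hφ1 : 0 < φ1)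
    (φm : ℝ → ℝ)
    (hφmper : ∀ t, φm (t + T) = φm t)
    (hφm0 : ∀ t ∈ Set.Ico (0:ℝ) (T / 2), φm t = φ0)
    (hφm1 : ∀ t ∈ Set.Ico (T / 2) T, φm t = φ1)
    (μ : ℝ → ℝ)
    (hμ : ∀ t ∈ Set.Ico (0:ℝ) (T / 2),
      μ t = Real.exp (-(φ0 + φ1) * t) / (1 + Real.exp (-(φ0 + φ1) * T / 2)) *
          ((φ0 - φ1) / (φ0 + φ1)) + φ1 / (φ0 + φ1))
    (hμhalf : ∀ t, μ (t + T / 2) = 1 - μ t) :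
    (∫ s in (0:ℝ)..T, φm s * μ s) =
      φ0 * φ1 * T / (φ0 + φ1) +
        ((φ0 - φ1) / (φ0 + φ1)) ^ 2 * Real.tanh ((φ0 + φ1) * T / 4) :=
  stmt11_general T φ0 φ1 hT hφ0 hφ1 φm hφm0 hφm1 μ hμ hμhalf
end
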